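/- With η₀, η₁, η₂ defined as below, define Ã₀ = γC − βB + βγ(Y·∂C/∂Y − Z·∂B/∂Z), Ã₁ = αA − γC + αγ(Z·∂A/∂Z − X·∂C/∂X), Ã₂ = βB − αA + αβ(X·∂B/∂X − Y·∂A/∂Y) in ℂ[X,Y,Z]. Then each Ã_i is homogeneous of degree d−1, and the curl of η satisfies: ∂η₂/∂x₁ − ∂η₁/∂x₂ = x₀·Ã₀(x₀^α, x₁^β, x₂^γ), ∂η₀/∂x₂ − ∂η₂/∂x₀ = x₁·Ã₁(x₀^α, x₁^β, x₂^γ), and ∂η₁/∂x₀ − ∂η₀/∂x₁ = x₂·Ã₂(x₀^α, x₁^β, x₂^γ). (Equivalently, dη = i_𝒵(dx₀∧dx₁∧dx₂) for the vector field 𝒵 with components 𝒵_i = x_i·Ã_i(x₀^α, x₁^β, x₂^γ).) -/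

import Mathlib

/-!
The substitution `Xⱼ ↦ Xⱼ ^ wⱼ` with `w = (α, β, γ)` multiplies the `i`-th exponent of every
monomial by `wᵢ`, so it intertwines the Euler operators: `xᵢ ∂ᵢ (P(x^w)) = wᵢ · (Xᵢ ∂ᵢ P)(x^w)`.
Each term of `curl η` is `∂ᵢ` of a constant times `xⱼ xᵢ P(x^w)`; the product rule and this identity
turn it into `xⱼ · (P + wᵢ Xᵢ ∂ᵢ P)(x^w)`, which assembles to `xₖ Ãₖ(x^w)`. The `Ãₖ` are
homogeneous because `Xᵢ ∂ᵢ` preserves homogeneous components.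
-/

open MvPolynomial

/-- Substitution of `x₀^α, x₁^β, x₂^γ` for the three variables of `P`. -/
noncomputable def substW (α β γ : ℕ) (P : MvPolynomial (Fin 3) ℂ) :
    MvPolynomial (Fin 3) ℂ :=
  aeval ![X 0 ^ α, X 1 ^ β, X 2 ^ γ] P

/-- The coefficients `η₀ = α·x₁x₂·A(x₀^α,x₁^β,x₂^γ)`,
`η₁ = β·x₀x₂·B(x₀^α,x₁^β,x₂^γ)`, `η₂ = γ·x₀x₁·C(x₀^α,x₁^β,x₂^γ)` of the local
1-form `η` of the pull-back foliation near an indeterminacy point. -/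
noncomputable def etaLocal (α β γ : ℕ) (A B Cp : MvPolynomial (Fin 3) ℂ) :
    Fin 3 → MvPolynomial (Fin 3) ℂ :=
  ![(α : MvPolynomial (Fin 3) ℂ) * X 1 * X 2 * substW α β γ A,
    (β : MvPolynomial (Fin 3) ℂ) * X 0 * X 2 * substW α β γ B,
    (γ : MvPolynomial (Fin 3) ℂ) * X 0 * X 1 * substW α β γ Cp]

/-- `Ã₀ = γC − βB + βγ(Y·∂C/∂Y − Z·∂B/∂Z)` (variables `X, Y, Z` are
`X 0, X 1, X 2`). -/
noncomputable def Atilde0 (α β γ : ℕ) (A B Cp : MvPolynomial (Fin 3) ℂ) :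
    MvPolynomial (Fin 3) ℂ :=
  (γ : MvPolynomial (Fin 3) ℂ) * Cp - (β : MvPolynomial (Fin 3) ℂ) * B +
    ((β * γ : ℕ) : MvPolynomial (Fin 3) ℂ) * (X 1 * pderiv 1 Cp - X 2 * pderiv 2 B)

/-- `Ã₁ = αA − γC + αγ(Z·∂A/∂Z − X·∂C/∂X)`. -/
noncomputable def Atilde1 (α β γ : ℕ) (A B Cp : MvPolynomial (Fin 3) ℂ) :
    MvPolynomial (Fin 3) ℂ :=
  (α : MvPolynomial (Fin 3) ℂ) * A - (γ : MvPolynomial (Fin 3) ℂ) * Cp +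
    ((α * γ : ℕ) : MvPolynomial (Fin 3) ℂ) * (X 2 * pderiv 2 A - X 0 * pderiv 0 Cp)

/-- `Ã₂ = βB − αA + αβ(X·∂B/∂X − Y·∂A/∂Y)`. -/
noncomputable def Atilde2 (α β γ : ℕ) (A B Cp : MvPolynomial (Fin 3) ℂ) :
    MvPolynomial (Fin 3) ℂ :=
  (β : MvPolynomial (Fin 3) ℂ) * B - (α : MvPolynomial (Fin 3) ℂ) * A +
    ((α * β : ℕ) : MvPolynomial (Fin 3) ℂ) * (X 0 * pderiv 0 B - X 1 * pderiv 1 A)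

namespace MvPolynomial

variable {σ R : Type*} [CommRing R]

theorem IsHomogeneous.natCast_mul {P : MvPolynomial σ R} {n : ℕ} (h : P.IsHomogeneous n)
    (k : ℕ) : ((k : MvPolynomial σ R) * P).IsHomogeneous n := by
  simpa only [map_natCast] using h.C_mul (k : R)

theorem IsHomogeneous.X_mul_pderiv {P : MvPolynomial σ R} {n : ℕ} (h : P.IsHomogeneous n)
    (i : σ) : (X i * pderiv i P).IsHomogeneous n := by
  obtain _ | n := n
  · rw [← totalDegree_zero_iff_isHomogeneous, totalDegree_eq_zero_iff_eq_C] at h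
    rw [h, pderiv_C, mul_zero]
    exact isHomogeneous_zero _ _ _
  · have h' := (isHomogeneous_X R i).mul (h.pderiv (i := i))
    rwa [Nat.add_sub_cancel, add_comm] at h'

theorem IsHomogeneous.natCast_mul_sub_add_X_mul_pderiv {P Q : MvPolynomial σ R} {n : ℕ}
    (hP : P.IsHomogeneous n) (hQ : Q.IsHomogeneous n) (a b c : ℕ) (i j : σ) :
    ((a : MvPolynomial σ R) * P - (b : MvPolynomial σ R) * Q +
      (c : MvPolynomial σ R) * (X i * pderiv i P - X j * pderiv j Q)).IsHomogeneous n :=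
  ((hP.natCast_mul a).sub (hQ.natCast_mul b)).add
    (((hP.X_mul_pderiv i).sub (hQ.X_mul_pderiv j)).natCast_mul c)

theorem pderiv_natCast_mul_X_mul_X_mul {i j : σ} (h : j ≠ i) (k : ℕ) (Q : MvPolynomial σ R) :
    pderiv i ((k : MvPolynomial σ R) * X j * X i * Q) =
      (k : MvPolynomial σ R) * X j * (Q + X i * pderiv i Q) := by
  simp only [pderiv_mul, Derivation.map_natCast, pderiv_X_of_ne h, pderiv_X_self]
  ring

theorem pderiv_natCast_mul_X_mul_X_mul' {i j : σ} (h : j ≠ i) (k : ℕ) (Q : MvPolynomial σ R) :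
    pderiv i ((k : MvPolynomial σ R) * X i * X j * Q) =
      (k : MvPolynomial σ R) * X j * (Q + X i * pderiv i Q) := by
  rw [mul_right_comm _ (X i), pderiv_natCast_mul_X_mul_X_mul h]

theorem X_mul_pderiv_aeval_X_pow (w : σ → ℕ) (i : σ) (P : MvPolynomial σ R) :
    X i * pderiv i (aeval (fun j ↦ X j ^ w j) P) =
      (w i : MvPolynomial σ R) * aeval (fun j ↦ X j ^ w j) (X i * pderiv i P) := by
  classical
  have hX : ∀ j, X i * pderiv i (X j ^ w j : MvPolynomial σ R) =
      (w i : MvPolynomial σ R) *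
        aeval (fun k ↦ (X k ^ w k : MvPolynomial σ R)) (X i * pderiv i (X j : MvPolynomial σ R)) := by
    intro j
    rw [X_pow_eq_monomial, X_mul_pderiv_monomial, pderiv_X, ← X_pow_eq_monomial, nsmul_eq_mul]
    by_cases hij : j = i
    · subst hij; simp
    · simp [Pi.single_eq_of_ne hij, Finsupp.single_eq_of_ne' hij]
  induction P using MvPolynomial.induction_on with
  | C a => simp
  | add p q hp hq => simp only [map_add, mul_add, hp, hq]
  | mul_X p j hp =>
    simp only [map_mul, aeval_X, pderiv_mul, mul_add, map_add] at hp hX ⊢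
    linear_combination (X j ^ w j : MvPolynomial σ R) * hp + aeval (fun j ↦ X j ^ w j) p * hX j

end MvPolynomial

section WeightedSubstitution

variable (α β γ : ℕ) (A B Cp : MvPolynomial (Fin 3) ℂ)

theorem substW_eq_aeval (P : MvPolynomial (Fin 3) ℂ) :
    substW α β γ P = aeval (fun j ↦ X j ^ ![α, β, γ] j) P := by
  unfold substW
  congr
  funext j
  fin_cases j <;> rfl

theorem X_mul_pderiv_substW (i : Fin 3) (P : MvPolynomial (Fin 3) ℂ) :
    X i * pderiv i (substW α β γ P) =
      (![α, β, γ] i : MvPolynomial (Fin 3) ℂ) * substW α β γ (X i * pderiv i P) := by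
  simp only [substW_eq_aeval]
  exact X_mul_pderiv_aeval_X_pow _ i P

theorem curl_etaLocal_zero :
    pderiv 1 (etaLocal α β γ A B Cp 2) - pderiv 2 (etaLocal α β γ A B Cp 1) =
      X 0 * substW α β γ (Atilde0 α β γ A B Cp) := by
  simp only [etaLocal, Matrix.cons_val]
  rw [pderiv_natCast_mul_X_mul_X_mul (by decide), pderiv_natCast_mul_X_mul_X_mul (by decide),
    X_mul_pderiv_substW, X_mul_pderiv_substW]
  simp only [Atilde0, substW, map_add, map_sub, map_mul, map_natCast, Matrix.cons_val]
  push_cast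
  ring

theorem curl_etaLocal_one :
    pderiv 2 (etaLocal α β γ A B Cp 0) - pderiv 0 (etaLocal α β γ A B Cp 2) =
      X 1 * substW α β γ (Atilde1 α β γ A B Cp) := by
  simp only [etaLocal, Matrix.cons_val]
  rw [pderiv_natCast_mul_X_mul_X_mul (by decide), pderiv_natCast_mul_X_mul_X_mul' (by decide),
    X_mul_pderiv_substW, X_mul_pderiv_substW]
  simp only [Atilde1, substW, map_add, map_sub, map_mul, map_natCast, Matrix.cons_val]
  push_cast
  ring

theorem curl_etaLocal_two :
    pderiv 0 (etaLocal α β γ A B Cp 1) - pderiv 1 (etaLocal α β γ A B Cp 0) =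
      X 2 * substW α β γ (Atilde2 α β γ A B Cp) := by
  simp only [etaLocal, Matrix.cons_val]
  rw [pderiv_natCast_mul_X_mul_X_mul' (by decide), pderiv_natCast_mul_X_mul_X_mul' (by decide),
    X_mul_pderiv_substW, X_mul_pderiv_substW]
  simp only [Atilde2, substW, map_add, map_sub, map_mul, map_natCast, Matrix.cons_val]
  push_cast
  ring

end WeightedSubstitution

theorem stmt_10_general (d α β γ : ℕ)
    (A B Cp : MvPolynomial (Fin 3) ℂ)
    (hA : A.IsHomogeneous (d - 1)) (hB : B.IsHomogeneous (d - 1))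
    (hC : Cp.IsHomogeneous (d - 1)) :
    (Atilde0 α β γ A B Cp).IsHomogeneous (d - 1) ∧
    (Atilde1 α β γ A B Cp).IsHomogeneous (d - 1) ∧
    (Atilde2 α β γ A B Cp).IsHomogeneous (d - 1) ∧
    pderiv 1 (etaLocal α β γ A B Cp 2) - pderiv 2 (etaLocal α β γ A B Cp 1) =
      X 0 * substW α β γ (Atilde0 α β γ A B Cp) ∧
    pderiv 2 (etaLocal α β γ A B Cp 0) - pderiv 0 (etaLocal α β γ A B Cp 2) =
      X 1 * substW α β γ (Atilde1 α β γ A B Cp) ∧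
    pderiv 0 (etaLocal α β γ A B Cp 1) - pderiv 1 (etaLocal α β γ A B Cp 0) =
      X 2 * substW α β γ (Atilde2 α β γ A B Cp) :=
  ⟨hC.natCast_mul_sub_add_X_mul_pderiv hB γ β (β * γ) 1 2,
    hA.natCast_mul_sub_add_X_mul_pderiv hC α γ (α * γ) 2 0,
    hB.natCast_mul_sub_add_X_mul_pderiv hA β α (α * β) 0 1,
    curl_etaLocal_zero α β γ A B Cp, curl_etaLocal_one α β γ A B Cp,
    curl_etaLocal_two α β γ A B Cp⟩

/-- each `Ã_i` is homogeneous of degree `d−1`, and the curl of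
`η` is given by `dη = i_𝒵(dx₀∧dx₁∧dx₂)` with `𝒵_i = x_i·Ã_i(x₀^α,x₁^β,x₂^γ)`. -/
theorem stmt_10 (d α β γ : ℕ) (hd : 2 ≤ d)
    (hα : 1 < α) (hαβ : α < β) (hβγ : β < γ)
    (A B Cp : MvPolynomial (Fin 3) ℂ)
    (hA : A.IsHomogeneous (d - 1)) (hB : B.IsHomogeneous (d - 1))
    (hC : Cp.IsHomogeneous (d - 1)) (hABC : A + B + Cp = 0) :
    (Atilde0 α β γ A B Cp).IsHomogeneous (d - 1) ∧
    (Atilde1 α β γ A B Cp).IsHomogeneous (d - 1) ∧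
    (Atilde2 α β γ A B Cp).IsHomogeneous (d - 1) ∧
    pderiv 1 (etaLocal α β γ A B Cp 2) - pderiv 2 (etaLocal α β γ A B Cp 1) =
      X 0 * substW α β γ (Atilde0 α β γ A B Cp) ∧
    pderiv 2 (etaLocal α β γ A B Cp 0) - pderiv 0 (etaLocal α β γ A B Cp 2) =
      X 1 * substW α β γ (Atilde1 α β γ A B Cp) ∧
    pderiv 0 (etaLocal α β γ A B Cp 1) - pderiv 1 (etaLocal α β γ A B Cp 0) =
      X 2 * substW α β γ (Atilde2 α β γ A B Cp) :=
  stmt_10_general d α β γ A B Cp hA hB hC
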